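/- arXiv:2410.05692 — 4 statements merged into one kernel-verified Lean document; each statement's English description precedes it below -/
import Mathlib

section
/- Let a > b > 0. The nonzero real solutions (V1, V2) of the system V1 = a·V1² + b·V2², V2 = b·V1² + a·V2² with V1, V2 > 0 are exactly: V1 = V2 = 1/(a+b), and, provided a² − 2ab − 3b² ≥ 0, the pair V1 = (a + b ± √(a² − 2ab − 3b²))/(2(a+b)(a−b)), V2 = (a + b ∓ √(a² − 2ab − 3b²))/(2(a+b)(a−b)). -/
/-!
Subtracting the two equations gives `(V₁ - V₂) (1 - (a - b)(V₁ + V₂)) = 0`. On the diagonal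
`V₁ = V₂` the system reduces to `V₁ = (a + b) V₁²`. Off the diagonal the sum `V₁ + V₂ = 1/(a - b)`
is fixed, and adding the equations shows that `s = (a + b)(a - b)(V₁ - V₂)` satisfies
`s² = a² - 2ab - 3b²`; so `s = ±√(a² - 2ab - 3b²)`, which determines `V₁` and `V₂`.
-/

section Field

variable {K : Type*} [Field K] {a b x y s : K}

def SpikeSystem (a b x y : K) : Prop :=
  x = a * x ^ 2 + b * y ^ 2 ∧ y = b * x ^ 2 + a * y ^ 2

theorem SpikeSystem.symm (h : SpikeSystem a b x y) : SpikeSystem a b y x :=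
  ⟨by linear_combination h.2, by linear_combination h.1⟩

theorem SpikeSystem.eq_or_sub_mul_add_eq_one (h : SpikeSystem a b x y) :
    x = y ∨ (a - b) * (x + y) = 1 := by
  have hfac : (x - y) * (1 - (a - b) * (x + y)) = 0 := by linear_combination h.1 - h.2
  rcases mul_eq_zero.1 hfac with hxy | hs
  · exact Or.inl (sub_eq_zero.1 hxy)
  · exact Or.inr (sub_eq_zero.1 hs).symm

theorem spikeSystem_self_iff (hx : x ≠ 0) : SpikeSystem a b x x ↔ x = 1 / (a + b) := by
  constructor
  · intro h
    have hone : (a + b) * x = 1 :=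
      mul_left_cancel₀ hx (by linear_combination -h.1)
    exact eq_one_div_of_mul_eq_one_right hone
  · intro hx'
    have hab : a + b ≠ 0 := fun hab => hx (by simp [hx', hab])
    have hone : (a + b) * x = 1 := by rw [hx']; field_simp
    constructor <;> linear_combination (-x) * hone

theorem SpikeSystem.exists_sq_eq_of_sub_mul_add_eq_one [NeZero (2 : K)] (h : SpikeSystem a b x y)
    (hs : (a - b) * (x + y) = 1) :
    ∃ s, s ^ 2 = a ^ 2 - 2 * a * b - 3 * b ^ 2 ∧
      x = (a + b + s) / (2 * (a + b) * (a - b)) ∧ y = (a + b - s) / (2 * (a + b) * (a - b)) := by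
  have hsum : x + y = (a + b) * (x ^ 2 + y ^ 2) := by linear_combination h.1 + h.2
  have hab : a + b ≠ 0 := fun hab => by
    rw [hab, zero_mul] at hsum
    simp [hsum] at hs
  have hamb : a - b ≠ 0 := left_ne_zero_of_mul_eq_one hs
  have hD : 2 * (a + b) * (a - b) ≠ 0 := mul_ne_zero (mul_ne_zero two_ne_zero hab) hamb
  refine ⟨(a + b) * (a - b) * (x - y), ?_, ?_, ?_⟩
  · linear_combination (-2 * (a + b) * (a - b) ^ 2) * hsum
      - (a + b) * ((a + b) * (a - b) * (x + y) - a + 3 * b) * hs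
  all_goals
    rw [eq_div_iff hD]
    linear_combination (a + b) * hs

theorem spikeSystem_div_of_sq_eq (hD : 2 * (a + b) * (a - b) ≠ 0)
    (hs : s ^ 2 = a ^ 2 - 2 * a * b - 3 * b ^ 2) :
    SpikeSystem a b ((a + b + s) / (2 * (a + b) * (a - b)))
      ((a + b - s) / (2 * (a + b) * (a - b))) := by
  have h2ab : 2 * (a + b) ≠ 0 := left_ne_zero_of_mul hD
  have h2 : (2 : K) ≠ 0 := left_ne_zero_of_mul h2ab
  have hab : a + b ≠ 0 := right_ne_zero_of_mul h2ab
  have hamb : a - b ≠ 0 := right_ne_zero_of_mul hD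
  constructor <;>
  · field_simp
    linear_combination (-(a + b)) * hs

end Field

theorem two_spike_heights_classification_general (a b V1 V2 : ℝ)
    (hV1 : V1 > 0) :
    (V1 = a * V1^2 + b * V2^2 ∧ V2 = b * V1^2 + a * V2^2) ↔
      (V1 = 1 / (a + b) ∧ V2 = 1 / (a + b)) ∨
      (a^2 - 2*a*b - 3*b^2 ≥ 0 ∧
        ((V1 = (a + b + Real.sqrt (a^2 - 2*a*b - 3*b^2)) / (2*(a+b)*(a-b)) ∧
          V2 = (a + b - Real.sqrt (a^2 - 2*a*b - 3*b^2)) / (2*(a+b)*(a-b))) ∨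
         (V1 = (a + b - Real.sqrt (a^2 - 2*a*b - 3*b^2)) / (2*(a+b)*(a-b)) ∧
          V2 = (a + b + Real.sqrt (a^2 - 2*a*b - 3*b^2)) / (2*(a+b)*(a-b))))) := by
  show SpikeSystem a b V1 V2 ↔ _
  constructor
  · intro h
    rcases h.eq_or_sub_mul_add_eq_one with rfl | hs
    · have hV := (spikeSystem_self_iff hV1.ne').1 h
      exact Or.inl ⟨hV, hV⟩
    obtain ⟨s, hs2, rfl, rfl⟩ := h.exists_sq_eq_of_sub_mul_add_eq_one hs
    refine Or.inr ⟨hs2 ▸ sq_nonneg s, ?_⟩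
    rw [← hs2, Real.sqrt_sq_eq_abs]
    rcases abs_choice s with hs' | hs' <;> rw [hs']
    · exact Or.inl ⟨rfl, rfl⟩
    · exact Or.inr ⟨by ring, by ring⟩
  · rintro (⟨hV, rfl⟩ | ⟨hΔ, ⟨rfl, rfl⟩ | ⟨rfl, rfl⟩⟩)
    · exact hV ▸ (spikeSystem_self_iff hV1.ne').2 hV
    · exact spikeSystem_div_of_sq_eq (div_ne_zero_iff.1 hV1.ne').2 (Real.sq_sqrt hΔ)
    · exact (spikeSystem_div_of_sq_eq (div_ne_zero_iff.1 hV1.ne').2 (Real.sq_sqrt hΔ)).symm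

theorem two_spike_heights_classification (a b V1 V2 : ℝ)
    (hab : a > b) (hb : b > 0) (hV1 : V1 > 0) (hV2 : V2 > 0) :
    (V1 = a * V1^2 + b * V2^2 ∧ V2 = b * V1^2 + a * V2^2) ↔
      (V1 = 1 / (a + b) ∧ V2 = 1 / (a + b)) ∨
      (a^2 - 2*a*b - 3*b^2 ≥ 0 ∧
        ((V1 = (a + b + Real.sqrt (a^2 - 2*a*b - 3*b^2)) / (2*(a+b)*(a-b)) ∧
          V2 = (a + b - Real.sqrt (a^2 - 2*a*b - 3*b^2)) / (2*(a+b)*(a-b))) ∨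
         (V1 = (a + b - Real.sqrt (a^2 - 2*a*b - 3*b^2)) / (2*(a+b)*(a-b)) ∧
          V2 = (a + b + Real.sqrt (a^2 - 2*a*b - 3*b^2)) / (2*(a+b)*(a-b))))) :=
  two_spike_heights_classification_general a b V1 V2 hV1
end

section
/- Let a > 3b > 0, and let V1, V2 be the two distinct positive roots V1 = (a + b + √(a² − 2ab − 3b²))/(2(a+b)(a−b)), V2 = (a + b − √(a² − 2ab − 3b²))/(2(a+b)(a−b)). Then the matrix I − M with M = [[2V1·a, 2V2·b],[2V1·b, 2V2·a]] has trace −2b/(a−b) < 0 and determinant (3b−a)/(a−b) < 0; hence I − M has one positive and one negative real eigenvalue. -/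
/-!
By Vieta, `V₁ + V₂ = 1/(a-b)` and `V₁V₂ = b/((a+b)(a-b)²)`, and the trace and determinant of
`1 - M` depend on `V₁, V₂` only through these symmetric functions; this gives the closed forms
and their signs. A real `2 × 2` matrix with negative determinant has characteristic polynomial
`μ² - tμ + d` with `d < 0`, whose discriminant `t² - 4d` exceeds `t²`, so its two real roots
`(t ± √(t² - 4d))/2` have opposite signs.
-/

open Matrix

namespace Matrix

theorem mem_spectrum_fin_two_iff {K : Type*} [Field K] (A : Matrix (Fin 2) (Fin 2) K) (μ : K) :
    μ ∈ spectrum K A ↔ μ ^ 2 - A.trace * μ + A.det = 0 := by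
  rw [mem_spectrum_iff_isRoot_charpoly, charpoly_fin_two]
  simp

theorem exists_pos_neg_mem_spectrum_of_det_neg (A : Matrix (Fin 2) (Fin 2) ℝ) (hA : A.det < 0) :
    ∃ μ₁ μ₂ : ℝ, 0 < μ₁ ∧ μ₂ < 0 ∧ μ₁ ∈ spectrum ℝ A ∧ μ₂ ∈ spectrum ℝ A := by
  set t := A.trace
  set r := Real.sqrt (t ^ 2 - 4 * A.det)
  have hr_sq : r ^ 2 = t ^ 2 - 4 * A.det := Real.sq_sqrt (by nlinarith)
  have hr_nonneg : 0 ≤ r := Real.sqrt_nonneg _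
  have hr_gt : |t| < r := abs_lt_of_sq_lt_sq (by nlinarith) hr_nonneg
  obtain ⟨ht_lower, ht_upper⟩ := abs_lt.mp hr_gt
  refine ⟨(t + r) / 2, (t - r) / 2, by linarith, by linarith, ?_, ?_⟩ <;>
    rw [mem_spectrum_fin_two_iff] <;> linear_combination hr_sq / 4

end Matrix

/-- The linearisation matrix of the two-spike system at spike heights `V₁, V₂`. -/
def twoSpikeMatrix (a b V₁ V₂ : ℝ) : Matrix (Fin 2) (Fin 2) ℝ :=
  !![2 * V₁ * a, 2 * V₂ * b; 2 * V₁ * b, 2 * V₂ * a]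

section TwoSpike

variable (a b V₁ V₂ : ℝ)

theorem trace_one_sub_twoSpikeMatrix :
    (1 - twoSpikeMatrix a b V₁ V₂).trace = 2 - 2 * a * (V₁ + V₂) := by
  rw [trace_fin_two]
  simp only [twoSpikeMatrix, Matrix.sub_apply, one_apply_eq, of_apply, cons_val', cons_val_zero,
    cons_val_one, cons_val_fin_one]
  ring

theorem det_one_sub_twoSpikeMatrix :
    (1 - twoSpikeMatrix a b V₁ V₂).det
      = 1 - 2 * a * (V₁ + V₂) + 4 * (a ^ 2 - b ^ 2) * (V₁ * V₂) := by
  rw [det_fin_two]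
  simp only [twoSpikeMatrix, Matrix.sub_apply, one_apply_eq, one_apply_ne zero_ne_one,
    one_apply_ne one_ne_zero, of_apply, cons_val', cons_val_zero, cons_val_one, cons_val_fin_one]
  ring

variable {a b}

theorem add_spike_heights (hp : a + b ≠ 0) (hm : a - b ≠ 0) (s : ℝ) :
    (a + b + s) / (2 * (a + b) * (a - b)) + (a + b - s) / (2 * (a + b) * (a - b))
      = 1 / (a - b) := by
  field_simp
  ring

theorem mul_spike_heights (hp : a + b ≠ 0) (hm : a - b ≠ 0) {s : ℝ}
    (hs : s ^ 2 = a ^ 2 - 2 * a * b - 3 * b ^ 2) :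
    (a + b + s) / (2 * (a + b) * (a - b)) * ((a + b - s) / (2 * (a + b) * (a - b)))
      = b / ((a + b) * (a - b) ^ 2) := by
  field_simp
  linear_combination -hs

end TwoSpike

theorem asymmetric_two_spike_instability (a b : ℝ) (hab : a > 3*b) (hb : b > 0)
    (V1 V2 : ℝ)
    (hV1 : V1 = (a + b + Real.sqrt (a^2 - 2*a*b - 3*b^2)) / (2*(a+b)*(a-b)))
    (hV2 : V2 = (a + b - Real.sqrt (a^2 - 2*a*b - 3*b^2)) / (2*(a+b)*(a-b))) :
    let M : Matrix (Fin 2) (Fin 2) ℝ := !![2*V1*a, 2*V2*b; 2*V1*b, 2*V2*a]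
    Matrix.trace (1 - M) = -2*b/(a - b) ∧
    Matrix.trace (1 - M) < 0 ∧
    Matrix.det (1 - M) = (3*b - a)/(a - b) ∧
    Matrix.det (1 - M) < 0 ∧
    (∃ μ₁ μ₂ : ℝ, μ₁ > 0 ∧ μ₂ < 0 ∧
      μ₁ ∈ spectrum ℝ (1 - M) ∧ μ₂ ∈ spectrum ℝ (1 - M)) := by
  change let M := twoSpikeMatrix a b V1 V2; _
  intro M
  have hp : a + b ≠ 0 := by linarith
  have hm : a - b ≠ 0 := by linarith
  have hsum : V1 + V2 = 1 / (a - b) := hV1 ▸ hV2 ▸ add_spike_heights hp hm _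
  have hprod : V1 * V2 = b / ((a + b) * (a - b) ^ 2) :=
    hV1 ▸ hV2 ▸ mul_spike_heights hp hm (Real.sq_sqrt (by nlinarith))
  have htrace : (1 - M).trace = -2 * b / (a - b) := by
    rw [trace_one_sub_twoSpikeMatrix, hsum]
    field_simp
    ring
  have hdet : (1 - M).det = (3 * b - a) / (a - b) := by
    rw [det_one_sub_twoSpikeMatrix, hsum, hprod]
    field_simp
    ring
  have hdet_neg : (1 - M).det < 0 := hdet ▸ div_neg_of_neg_of_pos (by linarith) (by linarith)
  exact ⟨htrace, htrace ▸ div_neg_of_neg_of_pos (by linarith) (by linarith), hdet, hdet_neg,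
    exists_pos_neg_mem_spectrum_of_det_neg _ hdet_neg⟩
end

section
/- Let a > b > 0 with a² − 2ab − 7b² ≥ 0. Then the nonzero real solutions V1 of the equation aV1² + 2b·(bV1² + ((a+b)/(2b))(V1 − aV1²))² − V1 = 0 are V1 = 1/(a+2b) and V1 = (a + 3b ± √(a² − 2ab − 7b²))/(2(a+2b)(a−b)). -/
/-!
Clearing the denominator `2b`, the quartic factors as
`V · ((a + 2b) V - 1) · ((a + 2b)(a - b)² V² - (a - b)(a + 3b) V + 2b)`.
The quadratic factor has discriminant `(a - b)² (a² - 2ab - 7b²)`, so the quadratic formula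
gives the two remaining roots, after cancelling a factor `a - b`.
-/

section

variable {K : Type*} [Field K] [NeZero (2 : K)]

theorem three_spike_mul_eq_factor (a b V : K) (hb : b ≠ 0) :
    2*b * (a*V^2 + 2*b*(b*V^2 + ((a+b)/(2*b))*(V - a*V^2))^2 - V)
      = V * (V*(a+2*b) - 1) * ((a+2*b)*(a-b)^2 * (V*V) + (-(a-b)*(a+3*b)) * V + 2*b) := by
  field_simp
  ring

theorem three_spike_quadratic_eq_zero_iff (a b s V : K) (hs : s*s = a^2 - 2*a*b - 7*b^2)
    (hab : a - b ≠ 0) (hab2 : a + 2*b ≠ 0) :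
    (a+2*b)*(a-b)^2 * (V*V) + (-(a-b)*(a+3*b)) * V + 2*b = 0 ↔
      V = (a + 3*b + s) / (2*(a+2*b)*(a-b)) ∨ V = (a + 3*b - s) / (2*(a+2*b)*(a-b)) := by
  have hdiscrim : discrim ((a+2*b)*(a-b)^2) (-(a-b)*(a+3*b)) (2*b) = ((a-b)*s) * ((a-b)*s) := by
    rw [discrim]
    linear_combination (-(a-b)^2) * hs
  rw [quadratic_eq_zero_iff (by positivity) hdiscrim]
  congr! 2 <;> field_simp

end

theorem three_spike_roots (a b : ℝ) (hab : a > b) (hb : b > 0)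
    (hdisc : a^2 - 2*a*b - 7*b^2 ≥ 0) (V1 : ℝ) (hV1 : V1 ≠ 0) :
    (a*V1^2 + 2*b*(b*V1^2 + ((a+b)/(2*b))*(V1 - a*V1^2))^2 - V1 = 0) ↔
      (V1 = 1/(a + 2*b) ∨
       V1 = (a + 3*b + Real.sqrt (a^2 - 2*a*b - 7*b^2)) / (2*(a+2*b)*(a-b)) ∨
       V1 = (a + 3*b - Real.sqrt (a^2 - 2*a*b - 7*b^2)) / (2*(a+2*b)*(a-b))) := by
  have hab2 : a + 2*b ≠ 0 := by linarith
  rw [← mul_eq_zero_iff_left (by positivity : 2*b ≠ 0), three_spike_mul_eq_factor a b V1 hb.ne',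
    mul_eq_zero, mul_eq_zero, or_iff_right hV1, sub_eq_zero, ← eq_div_iff hab2,
    three_spike_quadratic_eq_zero_iff a b _ V1 (Real.mul_self_sqrt hdisc) (sub_ne_zero.2 hab.ne')
      hab2]
end

section
/- Let l > 0 and θ ∈ (0, 2π) with cos θ ≠ 1. The function λ(l) = 1 − 2(cosh(2l) − 1)/(cosh(2l) − cos θ) satisfies λ(l) → −1 as l → ∞ and λ(l) → 1 as l → 0⁺, and λ is strictly decreasing in l; hence there is a unique l_c > 0 with λ(l_c) = 0, given by l_c = (1/2)arccosh(2 − cos θ). -/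
open Real Filter

noncomputable def arccosh (x : ℝ) : ℝ := Real.log (x + Real.sqrt (x^2 - 1))

lemma cosh_arccosh {x : ℝ} (hx : 1 < x) : Real.cosh (arccosh x) = x := by
  have h1 : (0:ℝ) ≤ x^2 - 1 := by nlinarith
  have hs : Real.sqrt (x^2-1) ^ 2 = x^2 - 1 := Real.sq_sqrt h1
  have hsn : 0 ≤ Real.sqrt (x^2-1) := Real.sqrt_nonneg _
  have hy : 0 < x + Real.sqrt (x^2-1) := by linarith
  rw [arccosh, Real.cosh_eq, Real.exp_log hy, Real.exp_neg, Real.exp_log hy]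
  field_simp
  nlinarith [hs]

lemma arccosh_pos {x : ℝ} (hx : 1 < x) : 0 < arccosh x := by
  have hsn : 0 ≤ Real.sqrt (x^2 - 1) := Real.sqrt_nonneg _
  exact Real.log_pos (by linarith)

theorem eigenvalue_monotone_unique_root (θ : ℝ) (hθ : θ ∈ Set.Ioo 0 (2*π))
    (hcos : Real.cos θ ≠ 1) :
    let lam : ℝ → ℝ := fun l => 1 - 2*(Real.cosh (2*l) - 1)/(Real.cosh (2*l) - Real.cos θ)
    Tendsto lam atTop (nhds (-1)) ∧
    Tendsto lam (nhdsWithin 0 (Set.Ioi 0)) (nhds 1) ∧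
    StrictAntiOn lam (Set.Ioi 0) ∧
    (∃! lc : ℝ, 0 < lc ∧ lam lc = 0) ∧
    lam ((1/2) * arccosh (2 - Real.cos θ)) = 0 ∧
    0 < (1/2) * arccosh (2 - Real.cos θ) := by
  have hc1 : Real.cos θ < 1 := lt_of_le_of_ne (Real.cos_le_one θ) hcos
  set c := Real.cos θ with hcdef
  intro lam
  have hden : ∀ l : ℝ, 0 < Real.cosh (2*l) - c := by
    intro l
    have := Real.one_le_cosh (2*l)
    linarith
  have hlam : ∀ l : ℝ, lam l = -1 + 2*(1-c)/(Real.cosh (2*l) - c) := by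
    intro l
    show 1 - 2*(Real.cosh (2*l) - 1)/(Real.cosh (2*l) - c)
        = -1 + 2*(1-c)/(Real.cosh (2*l) - c)
    have h := (hden l).ne'
    field_simp
    ring
  -- limit at infinity
  have hcoshtop : Tendsto (fun l : ℝ => Real.cosh (2*l) - c) atTop atTop := by
    have hexp : Tendsto (fun l : ℝ => Real.exp (2*l) / 2 - c) atTop atTop := by
      apply tendsto_atTop_add_const_right
      exact (Real.tendsto_exp_atTop.comp
        (tendsto_id.const_mul_atTop two_pos)).atTop_div_const two_pos
    refine tendsto_atTop_mono (fun l => ?_) hexp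
    have h1 := Real.exp_pos (-(2*l))
    rw [Real.cosh_eq]
    linarith
  have htop : Tendsto lam atTop (nhds (-1)) := by
    have h0 : Tendsto (fun l : ℝ => 2*(1-c)/(Real.cosh (2*l) - c)) atTop (nhds 0) :=
      Tendsto.div_atTop tendsto_const_nhds hcoshtop
    have := (tendsto_const_nhds (x := (-1:ℝ)) (f := atTop)).add h0
    simp only [add_zero] at this
    refine this.congr fun l => (hlam l).symm
  -- continuity
  have hcont : Continuous lam := by
    refine continuous_const.sub (Continuous.div ?_ ?_ fun l => (hden l).ne') <;>
      fun_prop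
  have h0lim : Tendsto lam (nhdsWithin 0 (Set.Ioi 0)) (nhds 1) := by
    have h00 : lam 0 = 1 := by
      show 1 - 2*(Real.cosh (2*0) - 1)/(Real.cosh (2*0) - c) = 1
      norm_num
    have h2 : Tendsto lam (nhdsWithin 0 (Set.Ioi 0)) (nhds (lam 0)) :=
      (hcont.tendsto 0).mono_left nhdsWithin_le_nhds
    rwa [h00] at h2
  -- strict anti
  have hanti : StrictAntiOn lam (Set.Ioi 0) := by
    intro x hx y hy hxy
    have hx' : 0 < x := hx
    have hy' : 0 < y := hy
    rw [hlam x, hlam y]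
    have hcosh : Real.cosh (2*x) < Real.cosh (2*y) := by
      rw [Real.cosh_lt_cosh]
      rw [abs_of_pos (by linarith), abs_of_pos (by linarith)]
      linarith
    have h1 : 0 < 2*(1-c) := by linarith
    have := div_lt_div_of_pos_left h1 (hden x) (by linarith : Real.cosh (2*x) - c < Real.cosh (2*y) - c)
    linarith
  -- root value
  have h2c : (1:ℝ) < 2 - c := by linarith
  have hlc0 : 0 < (1/2) * arccosh (2 - c) := by
    have := arccosh_pos h2c
    positivity
  have hcoshlc : Real.cosh (2 * ((1/2) * arccosh (2 - c))) = 2 - c := by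
    rw [show 2 * ((1/2) * arccosh (2 - c)) = arccosh (2 - c) by ring]
    exact cosh_arccosh h2c
  have hroot : lam ((1/2) * arccosh (2 - c)) = 0 := by
    rw [hlam, hcoshlc]
    have h1 : (2 - c - c) ≠ 0 := by
      intro h; linarith [h]
    field_simp
    ring
  refine ⟨htop, h0lim, hanti, ⟨(1/2) * arccosh (2 - c), ⟨hlc0, hroot⟩, ?_⟩, hroot, hlc0⟩
  rintro y ⟨hy0, hy⟩
  by_contra hne
  rcases lt_or_gt_of_ne hne with h | h
  · have := hanti hy0 hlc0 h
    rw [hy, hroot] at this; exact lt_irrefl _ this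
  · have := hanti hlc0 hy0 h
    rw [hy, hroot] at this; exact lt_irrefl _ this
end
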